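/- The number of cyclic binary strings b_1 ... b_m (m ≥ 3, indices modulo m) containing neither two cyclically consecutive zeros nor three cyclically consecutive ones equals the m-th Perrin number Q_m, where Q_1 = 0, Q_2 = 2, Q_3 = 3, and Q_n = Q_{n-2} + Q_{n-3}. -/

import Mathlib

/-- The Perrin sequence with `perrin 1 = 0`, `perrin 2 = 2`, `perrin 3 = 3` and
`perrin n = perrin (n-2) + perrin (n-3)`. -/
def perrin : ℕ → ℕ
  | 0 => 3
  | 1 => 0
  | 2 => 2
  | 3 => 3
  | n + 4 => perrin (n + 2) + perrin (n + 1)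

/-!
Record a cyclic string `b` by its consecutive pairs `(b i, b (i + 1))`. The forbidden patterns
become a condition on consecutive pairs, so admissible strings of length `m` are the closed walks
of length `m` in a digraph on `Bool × Bool`, and their number is the trace of the `m`-th power of
its adjacency matrix `A`. On its three non-isolated vertices `A` has characteristic polynomial
`X ^ 3 - X - 1`, hence `A ^ 4 = A ^ 2 + A`, so the traces of the powers of `A` satisfy the Perrin
recurrence; the initial values are checked directly.
-/

open Finset

section Walks

variable {V : Type*} (r : V → V → Prop)

def IsRelWalk {n : ℕ} (s : Fin (n + 1) → V) : Prop :=
  ∀ i : Fin n, r (s i.castSucc) (s i.succ)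

instance [DecidableRel r] {n : ℕ} : DecidablePred (IsRelWalk r (n := n)) :=
  fun _ => inferInstanceAs (Decidable (∀ _, _))

lemma isRelWalk_cons {n : ℕ} (x : V) (t : Fin (n + 1) → V) :
    IsRelWalk r (Fin.cons x t : Fin (n + 2) → V) ↔ r x (t 0) ∧ IsRelWalk r t := by
  simp only [IsRelWalk, Fin.forall_fin_succ, Fin.castSucc_zero, Fin.cons_zero, Fin.cons_succ,
    ← Fin.succ_castSucc]

lemma forall_rel_add_one_iff {n : ℕ} (s : Fin (n + 1) → V) :
    (∀ i, r (s i) (s (i + 1))) ↔ IsRelWalk r s ∧ r (s (Fin.last n)) (s 0) := by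
  simp only [Fin.forall_fin_succ', Fin.coeSucc_eq_succ, Fin.last_add_one, IsRelWalk]

variable [Fintype V] [DecidableEq V] [DecidableRel r]

def relMatrix : Matrix V V ℕ :=
  Matrix.of fun u v => if r u v then 1 else 0

lemma card_isRelWalk (n : ℕ) (u w : V) :
    Fintype.card {s : Fin (n + 1) → V // s 0 = u ∧ s (Fin.last n) = w ∧ IsRelWalk r s} =
      (relMatrix r ^ n) u w := by
  rw [Fintype.card_subtype, card_filter]
  induction n generalizing u with
  | zero =>
    rw [pow_zero, Matrix.one_apply, ← (Equiv.funUnique (Fin 1) V).symm.sum_comp]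
    by_cases h : u = w <;> simp [IsRelWalk, h]
  | succ n ih =>
    let e : V × (Fin (n + 1) → V) ≃ (Fin (n + 2) → V) := Fin.consEquiv fun _ => V
    rw [pow_succ', Matrix.mul_apply, ← e.sum_comp, Fintype.sum_prod_type]
    simp only [e, Fin.consEquiv, Equiv.coe_fn_mk, isRelWalk_cons, Fin.cons_zero, Fin.cons_last,
      ← ih, mul_sum, mul_boole]
    rw [sum_comm]
    conv_rhs => rw [sum_comm]
    refine sum_congr rfl fun t _ => ?_
    simp only [relMatrix, Matrix.of_apply, ite_and, sum_ite_eq, sum_ite_eq', mem_univ, if_true]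
    split_ifs <;> rfl

lemma card_cyclic_relWalk (n : ℕ) :
    Nat.card {s : Fin (n + 1) → V // ∀ i, r (s i) (s (i + 1))} =
      (relMatrix r ^ (n + 1)).trace := by
  simp only [forall_rel_add_one_iff]
  rw [Nat.card_eq_fintype_card, Fintype.card_subtype, card_filter, Matrix.trace, pow_succ]
  simp only [Matrix.diag_apply, Matrix.mul_apply, ← card_isRelWalk, Fintype.card_subtype, card_filter, sum_mul, boole_mul]
  conv_rhs => enter [2, u]; rw [sum_comm]
  rw [sum_comm]
  refine sum_congr rfl fun s _ => ?_
  simp only [relMatrix, Matrix.of_apply, ite_and]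
  simp [sum_ite_irrel]

end Walks

/-- `PerrinStep (b i, b (i + 1)) (b (i + 1), b (i + 2))` says that neither `b i, b (i + 1)` nor
`b (i + 1), b (i + 2)` is `0 0`, and that `b i, b (i + 1), b (i + 2)` is not `1 1 1`. -/
def PerrinStep (p q : Bool × Bool) : Prop :=
  p.2 = q.1 ∧ ¬(p.1 = false ∧ p.2 = false) ∧ ¬(q.1 = false ∧ q.2 = false) ∧
    ¬(p.1 = true ∧ p.2 = true ∧ q.2 = true)

instance : DecidableRel PerrinStep :=
  fun _ _ => inferInstanceAs (Decidable (_ ∧ _))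

def admissibleEquivPerrinStepCycle (G : Type*) [AddMonoidWithOne G] :
    {b : G → Bool //
      (∀ i, ¬(b i = false ∧ b (i + 1) = false)) ∧
      (∀ i, ¬(b i = true ∧ b (i + 1) = true ∧ b (i + 2) = true))} ≃
    {s : G → Bool × Bool // ∀ i, PerrinStep (s i) (s (i + 1))} where
  toFun b := ⟨fun i => (b.1 i, b.1 (i + 1)), fun i => by
    refine ⟨rfl, b.2.1 i, b.2.1 (i + 1), ?_⟩
    dsimp only
    rw [add_assoc, one_add_one_eq_two]
    exact b.2.2 i⟩
  invFun s := ⟨fun i => (s.1 i).1, by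
    refine ⟨fun i => ?_, fun i => ?_⟩
    · obtain ⟨hlink, hno00, -⟩ := s.2 i
      dsimp only
      rwa [← hlink]
    · obtain ⟨hlink, -, -, hno111⟩ := s.2 i
      obtain ⟨hlink', -⟩ := s.2 (i + 1)
      dsimp only
      rwa [← one_add_one_eq_two, ← add_assoc, ← hlink, ← hlink']⟩
  left_inv b := rfl
  right_inv s := Subtype.ext <| funext fun i => Prod.ext rfl (s.2 i).1.symm

lemma relMatrix_perrinStep_pow_four :
    relMatrix PerrinStep ^ 4 = relMatrix PerrinStep ^ 2 + relMatrix PerrinStep := by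
  decide

lemma eq_perrin_of_rec (f : ℕ → ℕ) (h1 : f 1 = 0) (h2 : f 2 = 2) (h3 : f 3 = 3)
    (h : ∀ n, f (n + 4) = f (n + 2) + f (n + 1)) : ∀ n, f (n + 1) = perrin (n + 1)
  | 0 => h1
  | 1 => h2
  | 2 => h3
  | n + 3 => by
    rw [h, perrin, eq_perrin_of_rec f h1 h2 h3 h (n + 1), eq_perrin_of_rec f h1 h2 h3 h n]

lemma trace_relMatrix_perrinStep_pow (n : ℕ) :
    (relMatrix PerrinStep ^ (n + 1)).trace = perrin (n + 1) := by
  refine eq_perrin_of_rec (fun k => (relMatrix PerrinStep ^ k).trace)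
    (by decide) (by decide) (by decide) (fun k => ?_) n
  rw [pow_add, relMatrix_perrinStep_pow_four, mul_add, ← pow_add, ← pow_succ, Matrix.trace_add]

/-- The number of cyclic binary strings of length `m ≥ 3` (indices modulo `m`)
containing neither two cyclically consecutive zeros nor three cyclically
consecutive ones equals the `m`-th Perrin number. -/
theorem stmt_3 (m : ℕ) (hm : 3 ≤ m) :
    Nat.card {b : ZMod m → Bool //
      (∀ i : ZMod m, ¬(b i = false ∧ b (i + 1) = false)) ∧
      (∀ i : ZMod m, ¬(b i = true ∧ b (i + 1) = true ∧ b (i + 2) = true))} =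
    perrin m := by
  obtain ⟨n, rfl⟩ : ∃ n, m = n + 1 := ⟨m - 1, by omega⟩
  rw [Nat.card_congr (admissibleEquivPerrinStepCycle _), ← trace_relMatrix_perrinStep_pow]
  -- `ZMod (n + 1)` is definitionally `Fin (n + 1)`, with the same addition.
  exact card_cyclic_relWalk PerrinStep n
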